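/- Let X be a normed space and C ⊆ X a non-zero normal wedge which is complete as a metric space in the norm topology. Let T : C → C be bounded and positively homogeneous, and assume in addition that either (i) T is monotone on C (with respect to the preorder induced by C), or (ii) T is continuous and additive on C. Then there exists x ∈ C such that r_x(T) = r(T). -/

import Mathlib

open Filter Topology Bornology Pointwise

variable {X : Type*}

section ConeDefs

variable [NormedAddCommGroup X] [NormedSpace ℝ X]

/-- `C` is a cone (with vertex `0`): `tC ⊆ C` for all `t ≥ 0`. -/
def IsCone (C : Set X) : Prop :=
  ∀ t : ℝ, 0 ≤ t → ∀ x ∈ C, t • x ∈ C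

/-- `T` is positively homogeneous (of degree 1) on `C`. -/
def PosHomOn (C : Set X) (T : X → X) : Prop :=
  ∀ t : ℝ, 0 ≤ t → ∀ x ∈ C, T (t • x) = t • T x

/-- `T` is Lipschitz on `C`. -/
def LipschitzOnCone (C : Set X) (T : X → X) : Prop :=
  ∃ L : ℝ, 0 < L ∧ ∀ x ∈ C, ∀ y ∈ C, ‖T x - T y‖ ≤ L * ‖x - y‖

/-- `T` is bounded on `C`: the set of ratios `‖T x‖/‖x‖` (over nonzero `x ∈ C`)
is bounded above. -/
def BoundedOnCone (C : Set X) (T : X → X) : Prop :=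
  BddAbove {r : ℝ | ∃ x ∈ C, x ≠ 0 ∧ r = ‖T x‖ / ‖x‖}

/-- The norm `‖T‖ = sup {‖T x‖/‖x‖ : x ∈ C, x ≠ 0}` of `T` on the cone `C`. -/
noncomputable def coneNorm (C : Set X) (T : X → X) : ℝ :=
  sSup {r : ℝ | ∃ x ∈ C, x ≠ 0 ∧ r = ‖T x‖ / ‖x‖}

/-- The Bonsall cone spectral radius `r(T) = lim_n ‖Tⁿ‖^{1/n} = inf_n ‖Tⁿ‖^{1/n}`
of `T` on the cone `C` (the limit exists and equals the infimum by submultiplicativity). -/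
noncomputable def coneRadius (C : Set X) (T : X → X) : ℝ :=
  ⨅ n : ℕ, (coneNorm C (T^[n + 1])) ^ ((1 : ℝ) / (n + 1))

/-- The local cone spectral radius `r_x(T) = limsup_n ‖Tⁿ x‖^{1/n}`. -/
noncomputable def localRadius (C : Set X) (T : X → X) (x : X) : ℝ :=
  Filter.limsup (fun n : ℕ => ‖T^[n] x‖ ^ ((1 : ℝ) / n)) Filter.atTop

/-- The approximate point spectrum of `T` on the cone `C`: all `s ≥ 0` with
`inf {‖T x - s x‖ : x ∈ C, ‖x‖ = 1} = 0`. -/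
def apSpectrum (C : Set X) (T : X → X) : Set ℝ :=
  {s : ℝ | 0 ≤ s ∧ ∀ ε : ℝ, 0 < ε → ∃ x ∈ C, ‖x‖ = 1 ∧ ‖T x - s • x‖ < ε}

end ConeDefs

section WedgeDefs

variable [NormedAddCommGroup X] [NormedSpace ℝ X]

/-- A wedge: a convex cone, i.e. `tC ⊆ C` for `t ≥ 0` and `C + C ⊆ C`. -/
def IsWedge (C : Set X) : Prop :=
  IsCone C ∧ ∀ x ∈ C, ∀ y ∈ C, x + y ∈ C

/-- A normal wedge: a wedge such that for some `M > 0`, `‖x‖ ≤ M ‖y‖` whenever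
`x, y ∈ C` and `y - x ∈ C`. -/
def IsNormalWedge (C : Set X) : Prop :=
  IsWedge C ∧ ∃ M : ℝ, 0 < M ∧ ∀ x ∈ C, ∀ y ∈ C, y - x ∈ C → ‖x‖ ≤ M * ‖y‖

/-- `T` is additive on `C`. -/
def AdditiveOn (C : Set X) (T : X → X) : Prop :=
  ∀ x ∈ C, ∀ y ∈ C, T (x + y) = T x + T y

end WedgeDefs

/-!
Every `x ∈ C` has `r_x(T) ≤ ‖Tᵏ‖^(1/k)` for each `k`, because `‖T^(m+k) x‖ ≤ ‖Tᵏ‖ ‖Tᵐ x‖`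
forces `‖Tⁿ x‖ = O(sⁿ)` for every `s > ‖Tᵏ‖^(1/k)`. For the converse, choose unit vectors
`u_m ∈ C` with `‖Tᵐ‖ ≤ 2 ‖Tᵐ u_m‖` and let `x = ∑ m⁻² u_m`, which converges in the complete
wedge. Since `x - m⁻² u_m ∈ C`, monotonicity of `Tᵐ` (automatic for additive `T`) and
normality give `‖Tᵐ‖ ≤ 2M m² ‖Tᵐ x‖`, and the polynomial factor disappears under `m`-th roots.
-/

theorem tendsto_const_rpow_one_div_nat {A : ℝ} (hA : 0 < A) :
    Tendsto (fun m : ℕ => A ^ (1 / (m : ℝ))) atTop (𝓝 1) := by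
  simpa using tendsto_const_nhds.rpow tendsto_one_div_atTop_nhds_zero_nat (Or.inl hA.ne')

theorem tendsto_mul_sq_rpow_one_div_nat {A : ℝ} (hA : 0 < A) :
    Tendsto (fun m : ℕ => (A * (m : ℝ) ^ 2) ^ (1 / (m : ℝ))) atTop (𝓝 1) := by
  have hroot : Tendsto (fun m : ℕ => (m : ℝ) ^ (1 / (m : ℝ))) atTop (𝓝 1) :=
    tendsto_rpow_div.comp tendsto_natCast_atTop_atTop
  have := (tendsto_const_rpow_one_div_nat hA).mul (hroot.pow 2)
  rw [one_pow, mul_one] at this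
  refine this.congr fun m => ?_
  rw [Real.mul_rpow hA.le (by positivity), Real.rpow_pow_comm (Nat.cast_nonneg m)]

section RootAsymptotics

variable {b : ℕ → ℝ}

theorem exists_le_mul_pow_of_add_le {k : ℕ} {s : ℝ} (hk : 0 < k) (hs : 0 < s)
    (h : ∀ m, b (m + k) ≤ s ^ k * b m) : ∃ K, ∀ m, b m ≤ K * s ^ m := by
  obtain ⟨K, hK⟩ := ((Finset.range k).image fun j => b j / s ^ j).bddAbove
  refine ⟨K, fun m => ?_⟩
  induction m using Nat.strong_induction_on with
  | _ m ih =>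
    rcases lt_or_ge m k with hmk | hkm
    · have := hK (Finset.mem_image_of_mem _ (Finset.mem_range.2 hmk))
      rwa [div_le_iff₀ (pow_pos hs m)] at this
    · obtain ⟨j, rfl⟩ := Nat.exists_eq_add_of_le' hkm
      calc b (j + k) ≤ s ^ k * b j := h j
        _ ≤ s ^ k * (K * s ^ j) := by gcongr; exact ih j (by omega)
        _ = K * s ^ (j + k) := by ring

theorem limsup_rpow_one_div_le_of_le_mul_pow {K ρ : ℝ} (hb : ∀ m, 0 ≤ b m) (hρ : 0 ≤ ρ)
    (hK : ∀ m, b m ≤ K * ρ ^ m) :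
    IsBoundedUnder (· ≤ ·) atTop (fun m => b m ^ (1 / (m : ℝ))) ∧
      limsup (fun m => b m ^ (1 / (m : ℝ))) atTop ≤ ρ := by
  have hK' : 0 < max K 1 := lt_max_of_lt_right one_pos
  have hlim : Tendsto (fun m : ℕ => max K 1 ^ (1 / (m : ℝ)) * ρ) atTop (𝓝 ρ) := by
    simpa using (tendsto_const_rpow_one_div_nat hK').mul_const ρ
  have hle : (fun m => b m ^ (1 / (m : ℝ))) ≤ᶠ[atTop] fun m => max K 1 ^ (1 / (m : ℝ)) * ρ := by
    filter_upwards [eventually_ne_atTop 0] with m hm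
    calc b m ^ (1 / (m : ℝ)) ≤ (max K 1 * ρ ^ m) ^ (1 / (m : ℝ)) := by
          gcongr
          · exact hb m
          · exact (hK m).trans (by gcongr; exact le_max_left K 1)
      _ = max K 1 ^ (1 / (m : ℝ)) * ρ := by
          rw [Real.mul_rpow hK'.le (by positivity), one_div, Real.pow_rpow_inv_natCast hρ hm]
  refine ⟨hlim.isBoundedUnder_le.mono_le hle, ?_⟩
  calc limsup (fun m => b m ^ (1 / (m : ℝ))) atTop
      ≤ limsup (fun m : ℕ => max K 1 ^ (1 / (m : ℝ)) * ρ) atTop :=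
        limsup_le_limsup hle (isCoboundedUnder_le_of_le atTop fun m => by have := hb m; positivity)
          hlim.isBoundedUnder_le
    _ = ρ := hlim.limsup_eq

theorem limsup_rpow_one_div_le_of_add_le_mul {k : ℕ} {a : ℝ} (hb : ∀ m, 0 ≤ b m) (hk : 0 < k)
    (ha : 0 ≤ a) (h : ∀ m, b (m + k) ≤ a * b m) :
    limsup (fun m => b m ^ (1 / (m : ℝ))) atTop ≤ a ^ (1 / (k : ℝ)) := by
  refine le_of_forall_gt_imp_ge_of_dense fun s hs => ?_
  have hs0 : 0 < s := lt_of_le_of_lt (by positivity) hs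
  have has : a ≤ s ^ k := by
    calc a = (a ^ (1 / (k : ℝ))) ^ k := by rw [one_div, Real.rpow_inv_natCast_pow ha hk.ne']
      _ ≤ s ^ k := by gcongr
  obtain ⟨K, hK⟩ := exists_le_mul_pow_of_add_le hk hs0 fun m =>
    (h m).trans (mul_le_mul_of_nonneg_right has (hb m))
  exact (limsup_rpow_one_div_le_of_le_mul_pow hb hs0.le hK).2

theorem le_limsup_rpow_one_div {r A : ℝ} (hb : ∀ m, 0 ≤ b m) (hr : 0 ≤ r) (hA : 0 < A)
    (hbdd : IsBoundedUnder (· ≤ ·) atTop (fun m => b m ^ (1 / (m : ℝ))))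
    (h : ∀ m : ℕ, 0 < m → r ^ m ≤ A * (m : ℝ) ^ 2 * b m) :
    r ≤ limsup (fun m => b m ^ (1 / (m : ℝ))) atTop := by
  have hlim : Tendsto (fun m : ℕ => r / (A * (m : ℝ) ^ 2) ^ (1 / (m : ℝ))) atTop (𝓝 r) := by
    have := (tendsto_const_nhds (x := r)).div (tendsto_mul_sq_rpow_one_div_nat hA) one_ne_zero
    rwa [div_one] at this
  have hle : (fun m : ℕ => r / (A * (m : ℝ) ^ 2) ^ (1 / (m : ℝ))) ≤ᶠ[atTop]
      fun m => b m ^ (1 / (m : ℝ)) := by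
    filter_upwards [eventually_gt_atTop 0] with m hm
    have hAm : 0 < A * (m : ℝ) ^ 2 := by positivity
    rw [div_le_iff₀' (by positivity), ← Real.mul_rpow hAm.le (hb m)]
    calc r = (r ^ m) ^ (1 / (m : ℝ)) := by rw [one_div, Real.pow_rpow_inv_natCast hr hm.ne']
      _ ≤ (A * (m : ℝ) ^ 2 * b m) ^ (1 / (m : ℝ)) := by gcongr; exact h m hm
  calc r = limsup (fun m : ℕ => r / (A * (m : ℝ) ^ 2) ^ (1 / (m : ℝ))) atTop := hlim.limsup_eq.symm
    _ ≤ _ := limsup_le_limsup hle hlim.isCoboundedUnder_le hbdd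

end RootAsymptotics

section ConeOperators

variable [NormedAddCommGroup X] {C : Set X} {T : X → X}

def ConeMonotoneOn (C : Set X) (T : X → X) : Prop :=
  ∀ x ∈ C, ∀ y ∈ C, y - x ∈ C → T y - T x ∈ C

theorem AdditiveOn.coneMonotoneOn (hadd : AdditiveOn C T) (hTC : Set.MapsTo T C C) :
    ConeMonotoneOn C T := by
  intro x hx y hy hxy
  have hsplit : T y = T (y - x) + T x := by rw [← hadd _ hxy _ hx, sub_add_cancel]
  rw [hsplit, add_sub_cancel_right]
  exact hTC hxy

theorem ConeMonotoneOn.iterate (hmono : ConeMonotoneOn C T) (hTC : Set.MapsTo T C C) (n : ℕ) :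
    ConeMonotoneOn C T^[n] := by
  induction n with
  | zero => exact fun x _ y _ hxy => hxy
  | succ n ih =>
    intro x hx y hy hxy
    rw [Function.iterate_succ_apply', Function.iterate_succ_apply']
    exact hmono _ (hTC.iterate n hx) _ (hTC.iterate n hy) (ih x hx y hy hxy)

theorem coneNorm_nonneg (C : Set X) (T : X → X) : 0 ≤ coneNorm C T :=
  Real.sSup_nonneg fun _ ⟨_, _, _, hr⟩ => hr ▸ by positivity

theorem BoundedOnCone.norm_le (hbdd : BoundedOnCone C T) (hT0 : T 0 = 0) {x : X} (hx : x ∈ C) :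
    ‖T x‖ ≤ coneNorm C T * ‖x‖ := by
  rcases eq_or_ne x 0 with rfl | hx0
  · simp [hT0]
  · rw [← div_le_iff₀ (norm_pos_iff.2 hx0)]
    exact le_csSup hbdd ⟨x, hx, hx0, rfl⟩

theorem boundedOnCone_of_norm_le {K : ℝ} (h : ∀ x ∈ C, ‖T x‖ ≤ K * ‖x‖) : BoundedOnCone C T := by
  refine ⟨K, ?_⟩
  rintro _ ⟨x, hx, hx0, rfl⟩
  rw [div_le_iff₀ (norm_pos_iff.2 hx0)]
  exact h x hx

theorem BoundedOnCone.norm_iterate_le (hbdd : BoundedOnCone C T) (hT0 : T 0 = 0)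
    (hTC : Set.MapsTo T C C) (n : ℕ) {x : X} (hx : x ∈ C) :
    ‖T^[n] x‖ ≤ coneNorm C T ^ n * ‖x‖ := by
  induction n with
  | zero => simp
  | succ n ih =>
    rw [Function.iterate_succ_apply', pow_succ', mul_assoc]
    exact (hbdd.norm_le hT0 (hTC.iterate n hx)).trans (by gcongr; exact coneNorm_nonneg _ _)

theorem BoundedOnCone.iterate (hbdd : BoundedOnCone C T) (hT0 : T 0 = 0)
    (hTC : Set.MapsTo T C C) (n : ℕ) : BoundedOnCone C T^[n] :=
  boundedOnCone_of_norm_le fun _ hx => hbdd.norm_iterate_le hT0 hTC n hx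

theorem coneRadius_nonneg (C : Set X) (T : X → X) : 0 ≤ coneRadius C T :=
  le_ciInf fun _ => Real.rpow_nonneg (coneNorm_nonneg _ _) _

theorem coneRadius_pow_le_coneNorm {m : ℕ} (hm : 0 < m) :
    coneRadius C T ^ m ≤ coneNorm C T^[m] := by
  obtain ⟨n, rfl⟩ : ∃ n, m = n + 1 := ⟨m - 1, by omega⟩
  have hle : coneRadius C T ≤ coneNorm C T^[n + 1] ^ (((n + 1 : ℕ) : ℝ))⁻¹ := by
    have : coneRadius C T ≤ _ :=
      ciInf_le ⟨0, by rintro _ ⟨k, rfl⟩; exact Real.rpow_nonneg (coneNorm_nonneg _ _) _⟩ n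
    rwa [one_div, ← Nat.cast_add_one] at this
  calc coneRadius C T ^ (n + 1) ≤ (coneNorm C T^[n + 1] ^ (((n + 1 : ℕ) : ℝ))⁻¹) ^ (n + 1) := by
        gcongr; exact coneRadius_nonneg _ _
    _ = coneNorm C T^[n + 1] := Real.rpow_inv_natCast_pow (coneNorm_nonneg _ _) n.succ_ne_zero

theorem localRadius_le_coneRadius (hbdd : BoundedOnCone C T) (hT0 : T 0 = 0)
    (hTC : Set.MapsTo T C C) {x : X} (hx : x ∈ C) : localRadius C T x ≤ coneRadius C T := by
  refine le_ciInf fun n => ?_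
  have h := limsup_rpow_one_div_le_of_add_le_mul (b := fun m => ‖T^[m] x‖)
    (fun _ => norm_nonneg _) n.succ_pos (coneNorm_nonneg C T^[n + 1]) fun m => ?_
  · rwa [Nat.cast_add_one] at h
  · rw [add_comm, Function.iterate_add_apply]
    exact (hbdd.iterate hT0 hTC _).norm_le (Function.iterate_fixed hT0 _) (hTC.iterate m hx)

theorem coneRadius_le_localRadius (hbdd : BoundedOnCone C T) (hT0 : T 0 = 0)
    (hTC : Set.MapsTo T C C) {x : X} (hx : x ∈ C) {A : ℝ} (hA : 0 < A)
    (h : ∀ m : ℕ, 0 < m → coneNorm C T^[m] ≤ A * (m : ℝ) ^ 2 * ‖T^[m] x‖) :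
    coneRadius C T ≤ localRadius C T x := by
  refine le_limsup_rpow_one_div (b := fun m => ‖T^[m] x‖) (fun _ => norm_nonneg _)
    (coneRadius_nonneg C T) hA ?_ fun m hm => (coneRadius_pow_le_coneNorm hm).trans (h m hm)
  exact (limsup_rpow_one_div_le_of_le_mul_pow (fun _ => norm_nonneg _) (coneNorm_nonneg _ _)
    fun m => (hbdd.norm_iterate_le hT0 hTC m hx).trans_eq (mul_comm _ _)).1

variable [NormedSpace ℝ X]

theorem PosHomOn.iterate (hhom : PosHomOn C T) (hTC : Set.MapsTo T C C) (n : ℕ) :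
    PosHomOn C T^[n] := by
  induction n with
  | zero => exact fun t _ x _ => rfl
  | succ n ih =>
    intro t ht x hx
    rw [Function.iterate_succ_apply', Function.iterate_succ_apply', ih t ht x hx,
      hhom t ht _ (hTC.iterate n hx)]

theorem PosHomOn.map_zero (hhom : PosHomOn C T) (h0 : (0 : X) ∈ C) : T 0 = 0 := by
  simpa using hhom 0 le_rfl 0 h0

theorem exists_norm_eq_one_coneNorm_le_two_mul (hC : IsCone C) (hCne : ∃ x ∈ C, x ≠ 0)
    (hhom : PosHomOn C T) : ∃ u ∈ C, ‖u‖ = 1 ∧ coneNorm C T ≤ 2 * ‖T u‖ := by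
  have hunit : ∀ y ∈ C, y ≠ 0 →
      ∃ u ∈ C, ‖u‖ = 1 ∧ ‖T u‖ = ‖T y‖ / ‖y‖ := by
    intro y hy hy0
    have hny : 0 < ‖y‖ := norm_pos_iff.2 hy0
    refine ⟨‖y‖⁻¹ • y, hC _ (by positivity) y hy, ?_, ?_⟩
    · rw [norm_smul, Real.norm_of_nonneg (by positivity), inv_mul_cancel₀ hny.ne']
    · rw [hhom _ (by positivity) y hy, norm_smul, Real.norm_of_nonneg (by positivity),
        inv_mul_eq_div]
  obtain ⟨x₀, hx₀, hx₀0⟩ := hCne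
  rcases le_or_gt (coneNorm C T) 0 with hc | hc
  · obtain ⟨u, hu, hu1, -⟩ := hunit x₀ hx₀ hx₀0
    exact ⟨u, hu, hu1, hc.trans (by positivity)⟩
  · obtain ⟨_, ⟨y, hy, hy0, rfl⟩, hlt⟩ :=
      exists_lt_of_lt_csSup (s := {r : ℝ | ∃ x ∈ C, x ≠ 0 ∧ r = ‖T x‖ / ‖x‖})
        ⟨_, x₀, hx₀, hx₀0, rfl⟩ (half_lt_self hc)
    obtain ⟨u, hu, hu1, hTu⟩ := hunit y hy hy0
    change coneNorm C T / 2 < _ at hlt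
    exact ⟨u, hu, hu1, by rw [hTu]; linarith⟩

end ConeOperators

section Wedge

variable [NormedAddCommGroup X] [NormedSpace ℝ X] {C : Set X}

theorem IsWedge.zero_mem (hC : IsWedge C) (hne : C.Nonempty) : (0 : X) ∈ C := by
  obtain ⟨x, hx⟩ := hne
  simpa using hC.1 0 le_rfl x hx

theorem IsWedge.sum_mem {ι : Type*} (hC : IsWedge C) (h0 : (0 : X) ∈ C) {w : ι → X}
    (s : Finset ι) (hw : ∀ i ∈ s, w i ∈ C) : ∑ i ∈ s, w i ∈ C :=
  Finset.sum_induction _ (· ∈ C) (fun a b ha hb => hC.2 a ha b hb) h0 hw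

theorem IsWedge.mem_of_hasSum (hC : IsWedge C) (hclosed : IsClosed C) (h0 : (0 : X) ∈ C)
    {w : ℕ → X} {x : X} (hw : ∀ n, w n ∈ C) (hx : HasSum w x) : x ∈ C :=
  hclosed.mem_of_tendsto hx.tendsto_sum_nat
    (Eventually.of_forall fun _ => hC.sum_mem h0 _ fun i _ => hw i)

theorem IsWedge.exists_forall_sub_mem (hC : IsWedge C) (hcomplete : IsComplete C) {w : ℕ → X}
    (hw : ∀ n, w n ∈ C) (hsum : Summable fun n => ‖w n‖) : ∃ x ∈ C, ∀ n, x - w n ∈ C := by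
  have h0 : (0 : X) ∈ C := hC.zero_mem ⟨_, hw 0⟩
  obtain ⟨x, hxC, hlim⟩ := cauchySeq_tendsto_of_isComplete hcomplete
    (fun m => hC.sum_mem h0 (Finset.range m) fun i _ => hw i)
    (cauchySeq_range_of_norm_bounded hsum.hasSum.tendsto_sum_nat.cauchySeq fun _ => le_rfl)
  have hx : HasSum w x := (hasSum_iff_tendsto_nat_of_summable_norm hsum).2 hlim
  refine ⟨x, hxC, fun n => ?_⟩
  classical
  have hupdate : HasSum (Function.update w n 0) (x - w n) := by
    simpa [sub_eq_neg_add] using hx.update n 0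
  exact hC.mem_of_hasSum hcomplete.isClosed h0
    ((Function.forall_update_iff w (p := fun _ y => y ∈ C)).2 ⟨h0, fun i _ => hw i⟩) hupdate

end Wedge

/-- **Proposition 4.6.** Let `X` be a normed space and `C ⊆ X` a non-zero normal wedge
which is complete in the norm topology. Let `T : C → C` be bounded and positively
homogeneous, and suppose that either (i) `T` is monotone on `C` (with respect to the
preorder induced by `C`), or (ii) `T` is continuous and additive on `C`. Then there
exists `x ∈ C` with `r_x(T) = r(T)`. -/
theorem exists_localRadius_eq_coneRadius_wedge [NormedAddCommGroup X] [NormedSpace ℝ X]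
    (C : Set X) (hC : IsNormalWedge C) (hCne : ∃ x ∈ C, x ≠ 0)
    (hCcomplete : IsComplete C)
    (T : X → X) (hTC : Set.MapsTo T C C)
    (hbdd : BoundedOnCone C T) (hhom : PosHomOn C T)
    (hT : (∀ x ∈ C, ∀ y ∈ C, y - x ∈ C → T y - T x ∈ C) ∨
      (ContinuousOn T C ∧ AdditiveOn C T)) :
    ∃ x ∈ C, localRadius C T x = coneRadius C T := by
  obtain ⟨hW, M, hM, hnormal⟩ := hC
  have hT0 : T 0 = 0 := hhom.map_zero (hW.zero_mem (hCne.imp fun _ h => h.1))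
  have hmono : ConeMonotoneOn C T := hT.elim id fun h => h.2.coneMonotoneOn hTC
  choose u huC hu1 hu using fun m =>
    exists_norm_eq_one_coneNorm_le_two_mul hW.1 hCne (hhom.iterate hTC m)
  -- `w 0 = 0` because `(0 : ℝ)⁻¹ = 0`; only the weights `m⁻²` with `m ≥ 1` are used.
  set w : ℕ → X := fun m => ((m : ℝ) ^ 2)⁻¹ • u m
  have hwC : ∀ m, w m ∈ C := fun m => hW.1 _ (by positivity) _ (huC m)
  have hws : Summable fun m => ‖w m‖ := by
    simp [w, norm_smul, hu1, Real.summable_nat_pow_inv]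
  obtain ⟨x, hxC, hxw⟩ := hW.exists_forall_sub_mem hCcomplete hwC hws
  refine ⟨x, hxC, le_antisymm (localRadius_le_coneRadius hbdd hT0 hTC hxC)
    (coneRadius_le_localRadius hbdd hT0 hTC hxC (mul_pos two_pos hM) fun m hm => ?_)⟩
  have hm0 : (m : ℝ) ≠ 0 := by positivity
  calc coneNorm C T^[m] ≤ 2 * ‖T^[m] (u m)‖ := hu m
    _ = 2 * (m : ℝ) ^ 2 * ‖T^[m] (w m)‖ := by
        rw [hhom.iterate hTC m _ (by positivity) _ (huC m), norm_smul,
          Real.norm_of_nonneg (by positivity)]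
        field_simp
    _ ≤ 2 * (m : ℝ) ^ 2 * (M * ‖T^[m] x‖) := by
        gcongr
        exact hnormal _ (hTC.iterate m (hwC m)) _ (hTC.iterate m hxC)
          (hmono.iterate hTC m _ (hwC m) _ hxC (hxw m))
    _ = 2 * M * (m : ℝ) ^ 2 * ‖T^[m] x‖ := by ring
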